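/- arXiv:2304.14934 — 3 statements merged into one kernel-verified Lean document; each statement's English description precedes it below -/
import Mathlib

section
/- There exists a 3SS scheme for the domain S = {000, 001, 010, 100} ⊆ {0,1}³, using a uniformly random injection assigning values in {0,1,2} as randomness R with |R| = 6, in which party Pᵢ's two shares are equal if and only if xᵢ = 1: if xᵢ = 1 then the two shares seen by Pᵢ are equal and uniform on {0,1,2}, and if xᵢ = 0 they are uniformly distributed distinct elements of {0,1,2}; hence ρ(S) ≤ log 6. -/
open scoped Classical

/-- A distribution scheme: a distribution `pR` on a finite randomness set `R`
and a map producing three shares from a secret and the randomness. -/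
structure Scheme (X A B C R : Type) [Fintype R] where
  pR : R → ℝ
  nonneg : ∀ r, 0 ≤ pR r
  sum_one : ∑ r, pR r = 1
  share : X → R → A × B × C

/-- Party `P₁`'s view: `(W₁₂, W₃₁)`. -/
def view1 {A B C : Type} (w : A × B × C) : A × C := (w.1, w.2.2)
/-- Party `P₂`'s view: `(W₂₃, W₁₂)`. -/
def view2 {A B C : Type} (w : A × B × C) : B × A := (w.2.1, w.1)
/-- Party `P₃`'s view: `(W₃₁, W₂₃)`. -/
def view3 {A B C : Type} (w : A × B × C) : C × B := (w.2.2, w.2.1)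

/-- Probability that party `P₁`'s pair of shares equals `v`, given the secret `x`. -/
noncomputable def probV1 {X A B C R : Type} [Fintype R] (sch : Scheme X A B C R)
    (x : X) (v : A × C) : ℝ :=
  ∑ r, if view1 (sch.share x r) = v then sch.pR r else 0

/-- Probability that party `P₂`'s pair of shares equals `v`, given the secret `x`. -/
noncomputable def probV2 {X A B C R : Type} [Fintype R] (sch : Scheme X A B C R)
    (x : X) (v : B × A) : ℝ :=
  ∑ r, if view2 (sch.share x r) = v then sch.pR r else 0

/-- Probability that party `P₃`'s pair of shares equals `v`, given the secret `x`. -/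
noncomputable def probV3 {X A B C R : Type} [Fintype R] (sch : Scheme X A B C R)
    (x : X) (v : C × B) : ℝ :=
  ∑ r, if view3 (sch.share x r) = v then sch.pR r else 0

/-- A distribution scheme is a 3SS scheme for domain `S`:
perfect correctness (each party reconstructs its secret coordinate from its
pair of shares) and perfect privacy (the distribution of party `Pᵢ`'s pair of
shares depends on the secret vector only through coordinate `i`). -/
def Is3SS {X1 X2 X3 A B C R : Type} [Fintype R] (S : Set (X1 × X2 × X3))
    (sch : Scheme (X1 × X2 × X3) A B C R) : Prop :=
  (∃ φ1 : A × C → X1, ∀ x ∈ S, ∀ r, 0 < sch.pR r → φ1 (view1 (sch.share x r)) = x.1) ∧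
  (∃ φ2 : B × A → X2, ∀ x ∈ S, ∀ r, 0 < sch.pR r → φ2 (view2 (sch.share x r)) = x.2.1) ∧
  (∃ φ3 : C × B → X3, ∀ x ∈ S, ∀ r, 0 < sch.pR r → φ3 (view3 (sch.share x r)) = x.2.2) ∧
  (∀ x ∈ S, ∀ x' ∈ S, x.1 = x'.1 → ∀ v, probV1 sch x v = probV1 sch x' v) ∧
  (∀ x ∈ S, ∀ x' ∈ S, x.2.1 = x'.2.1 → ∀ v, probV2 sch x v = probV2 sch x' v) ∧
  (∀ x ∈ S, ∀ x' ∈ S, x.2.2 = x'.2.2 → ∀ v, probV3 sch x v = probV3 sch x' v)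

/-- The randomness complexity `ρ(S)`: the infimum of `log₂ |R|` over all
3SS schemes for domain `S`. -/
noncomputable def rho {X1 X2 X3 : Type} (S : Set (X1 × X2 × X3)) : ℝ :=
  sInf { t : ℝ | ∃ (n : ℕ) (A B C : Type) (sch : Scheme (X1 × X2 × X3) A B C (Fin n)),
    Is3SS S sch ∧ t = Real.logb 2 n }

/-- The domain `S = {000, 001, 010, 100}`: at most one secret equals 1. -/
def S4 : Set (Bool × Bool × Bool) :=
  {(false, false, false), (false, false, true), (false, true, false), (true, false, false)}

/-- The six ordered pairs of distinct elements of `{0,1,2}`, with third coordinate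
the remaining element. -/
def abc6 : Fin 6 → Fin 3 × Fin 3 × Fin 3
  | 0 => (0,1,2)
  | 1 => (0,2,1)
  | 2 => (1,0,2)
  | 3 => (1,2,0)
  | 4 => (2,0,1)
  | 5 => (2,1,0)

/-- The share function: based on which coordinate (if any) of the secret is `true`,
duplicate the appropriate component. -/
def shareS4 : (Bool × Bool × Bool) → Fin 6 → Fin 3 × Fin 3 × Fin 3 :=
  fun x r =>
    let p := abc6 r
    match x with
    | (true, _, _) => (p.1, p.2.1, p.1)
    | (_, true, _) => (p.1, p.1, p.2.2)
    | (_, _, true) => (p.1, p.2.1, p.2.1)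
    | _ => p

noncomputable def schS4 : Scheme (Bool × Bool × Bool) (Fin 3) (Fin 3) (Fin 3) (Fin 6) where
  pR := fun _ => 1/6
  nonneg := fun _ => by norm_num
  sum_one := by norm_num
  share := shareS4

lemma probV1_schS4 : ∀ x ∈ S4, ∀ v : Fin 3 × Fin 3, probV1 schS4 x v =
    if x.1 = true then (if v.1 = v.2 then 1 / 3 else 0)
    else (if v.1 = v.2 then 0 else 1 / 6) := by
  intro x hx v
  obtain ⟨v1, v2⟩ := v
  simp only [S4, Set.mem_insert_iff, Set.mem_singleton_iff] at hx
  rcases hx with rfl|rfl|rfl|rfl <;>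
    fin_cases v1 <;> fin_cases v2 <;>
      norm_num (config := {decide := true}) [probV1, schS4, shareS4, abc6, view1, Fin.sum_univ_six, Prod.ext_iff]

lemma probV2_schS4 : ∀ x ∈ S4, ∀ v : Fin 3 × Fin 3, probV2 schS4 x v =
    if x.2.1 = true then (if v.1 = v.2 then 1 / 3 else 0)
    else (if v.1 = v.2 then 0 else 1 / 6) := by
  intro x hx v
  obtain ⟨v1, v2⟩ := v
  simp only [S4, Set.mem_insert_iff, Set.mem_singleton_iff] at hx
  rcases hx with rfl|rfl|rfl|rfl <;>
    fin_cases v1 <;> fin_cases v2 <;>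
      norm_num (config := {decide := true}) [probV2, schS4, shareS4, abc6, view2, Fin.sum_univ_six, Prod.ext_iff]

lemma probV3_schS4 : ∀ x ∈ S4, ∀ v : Fin 3 × Fin 3, probV3 schS4 x v =
    if x.2.2 = true then (if v.1 = v.2 then 1 / 3 else 0)
    else (if v.1 = v.2 then 0 else 1 / 6) := by
  intro x hx v
  obtain ⟨v1, v2⟩ := v
  simp only [S4, Set.mem_insert_iff, Set.mem_singleton_iff] at hx
  rcases hx with rfl|rfl|rfl|rfl <;>
    fin_cases v1 <;> fin_cases v2 <;>
      norm_num (config := {decide := true}) [probV3, schS4, shareS4, abc6, view3, Fin.sum_univ_six, Prod.ext_iff]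

lemma is3SS_schS4 : Is3SS S4 schS4 := by
  refine ⟨⟨fun v => decide (v.1 = v.2), ?_⟩, ⟨fun v => decide (v.1 = v.2), ?_⟩,
    ⟨fun v => decide (v.1 = v.2), ?_⟩, ?_, ?_, ?_⟩
  · intro x hx r _
    simp only [S4, Set.mem_insert_iff, Set.mem_singleton_iff] at hx
    rcases hx with rfl|rfl|rfl|rfl <;> fin_cases r <;>
      simp [schS4, shareS4, abc6, view1, Fin.ext_iff]
  · intro x hx r _
    simp only [S4, Set.mem_insert_iff, Set.mem_singleton_iff] at hx
    rcases hx with rfl|rfl|rfl|rfl <;> fin_cases r <;>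
      simp [schS4, shareS4, abc6, view2, Fin.ext_iff]
  · intro x hx r _
    simp only [S4, Set.mem_insert_iff, Set.mem_singleton_iff] at hx
    rcases hx with rfl|rfl|rfl|rfl <;> fin_cases r <;>
      simp [schS4, shareS4, abc6, view3, Fin.ext_iff]
  · intro x hx x' hx' h v
    rw [probV1_schS4 x hx v, probV1_schS4 x' hx' v, h]
  · intro x hx x' hx' h v
    rw [probV2_schS4 x hx v, probV2_schS4 x' hx' v, h]
  · intro x hx x' hx' h v
    rw [probV3_schS4 x hx v, probV3_schS4 x' hx' v, h]

/-- There is a 3SS scheme for `S = {000,001,010,100}` with `|R| = 6`, shares in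
`{0,1,2}`, such that party `Pᵢ`'s two shares are equal iff `xᵢ = 1`: if `xᵢ = 1`
the pair is a uniform diagonal pair of `{0,1,2}`, and if `xᵢ = 0` it is a
uniformly random pair of distinct elements of `{0,1,2}`. Hence `ρ(S) ≤ log₂ 6`. -/
theorem exists_log6_scheme_S4 :
    ∃ sch : Scheme (Bool × Bool × Bool) (Fin 3) (Fin 3) (Fin 3) (Fin 6),
      Is3SS S4 sch ∧
      (∀ x ∈ S4, ∀ v : Fin 3 × Fin 3, probV1 sch x v =
        if x.1 = true then (if v.1 = v.2 then 1 / 3 else 0)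
        else (if v.1 = v.2 then 0 else 1 / 6)) ∧
      (∀ x ∈ S4, ∀ v : Fin 3 × Fin 3, probV2 sch x v =
        if x.2.1 = true then (if v.1 = v.2 then 1 / 3 else 0)
        else (if v.1 = v.2 then 0 else 1 / 6)) ∧
      (∀ x ∈ S4, ∀ v : Fin 3 × Fin 3, probV3 sch x v =
        if x.2.2 = true then (if v.1 = v.2 then 1 / 3 else 0)
        else (if v.1 = v.2 then 0 else 1 / 6)) ∧
      rho S4 ≤ Real.logb 2 6 := by
  refine ⟨schS4, is3SS_schS4, probV1_schS4, probV2_schS4, probV3_schS4, ?_⟩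
  have hmem : Real.logb 2 6 ∈ { t : ℝ | ∃ (n : ℕ) (A B C : Type)
      (sch : Scheme (Bool × Bool × Bool) A B C (Fin n)),
      Is3SS S4 sch ∧ t = Real.logb 2 n } := by
    exact ⟨6, Fin 3, Fin 3, Fin 3, schS4, is3SS_schS4, by norm_num⟩
  have hbdd : BddBelow { t : ℝ | ∃ (n : ℕ) (A B C : Type)
      (sch : Scheme (Bool × Bool × Bool) A B C (Fin n)),
      Is3SS S4 sch ∧ t = Real.logb 2 n } := by
    refine ⟨0, ?_⟩
    rintro t ⟨n, A, B, C, sch, _, rfl⟩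
    rcases Nat.eq_zero_or_pos n with rfl | hn
    · simp
    · exact Real.logb_nonneg (by norm_num) (by exact_mod_cast hn)
  exact csInf_le hbdd hmem
end

section
/- Any 3SS scheme for the domain S = {000, 001, 010, 111} ⊆ {0,1}³ satisfies |M_{001}| ≥ 6, where M_x is the set of share triples that occur with positive probability on input x. Consequently ρ(S) ≥ log 6. -/
open scoped Classical

/-- Probability that the share triple equals `w`, given the secret `x`. -/
noncomputable def probW {X A B C R : Type} [Fintype R] (sch : Scheme X A B C R)
    (x : X) (w : A × B × C) : ℝ :=
  ∑ r, if sch.share x r = w then sch.pR r else 0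

/-- `M_x`: the set of share triples occurring with positive probability on input `x`. -/
def Msupp {X A B C R : Type} [Fintype R] (sch : Scheme X A B C R) (x : X) :
    Set (A × B × C) :=
  {w | 0 < probW sch x w}

/-- The domain `S = {000, 001, 010, 111}` (family 13). -/
def S5 : Set (Bool × Bool × Bool) :=
  {(false, false, false), (false, false, true), (false, true, false), (true, true, true)}

/-!
Let `E ⊆ A × C` be the set of views of `P₁` on `M₀₀₁`, so `|M₀₀₁| ≥ |E|`. Chaining privacy
(which transports support points between secrets agreeing in one coordinate) with correctness
(which forbids two secrets differing in a coordinate from sharing a view) through the secrets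
`000`, `010` and `111`, every row and every column of `E` has at least two points, while some
cell in an occupied row and an occupied column is missing. Such an `E` has at least three rows,
hence at least six points.

For `ρ(S)`, `|R| ≥ |M₀₀₁|` in every scheme, and the one-time pad on three random bits shows that
the infimum is over a nonempty set (`sInf ∅ = 0` in `ℝ`).
-/

lemma sum_ite_pos_iff {R : Type} [Fintype R] {p : R → ℝ} (hp : ∀ r, 0 ≤ p r)
    (P : R → Prop) [DecidablePred P] :
    0 < (∑ r, if P r then p r else 0) ↔ ∃ r, 0 < p r ∧ P r := by
  rw [Finset.sum_pos_iff_of_nonneg fun r _ => by split_ifs <;> simp [hp r]]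
  simp only [Finset.mem_univ, true_and]
  refine exists_congr fun r => ?_
  split_ifs with h <;> simp [h]

section Support

variable {X A B C R : Type} [Fintype R] (sch : Scheme X A B C R)

lemma mem_Msupp_iff {x : X} {w : A × B × C} :
    w ∈ Msupp sch x ↔ ∃ r, 0 < sch.pR r ∧ sch.share x r = w :=
  sum_ite_pos_iff sch.nonneg _

lemma Msupp_nonempty (x : X) : (Msupp sch x).Nonempty := by
  obtain ⟨r, -, hr⟩ := Finset.exists_lt_of_sum_lt (s := Finset.univ) (f := 0) (g := sch.pR)
    (by simp [sch.sum_one])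
  exact ⟨sch.share x r, (mem_Msupp_iff sch).2 ⟨r, hr, rfl⟩⟩

lemma Msupp_subset_range (x : X) : Msupp sch x ⊆ Set.range (sch.share x) := by
  intro w hw
  obtain ⟨r, -, rfl⟩ := (mem_Msupp_iff sch).1 hw
  exact ⟨r, rfl⟩

lemma Msupp_finite (x : X) : (Msupp sch x).Finite :=
  (Set.finite_range _).subset (Msupp_subset_range sch x)

lemma ncard_Msupp_le_card (x : X) : (Msupp sch x).ncard ≤ Nat.card R :=
  (Set.ncard_le_ncard (Msupp_subset_range sch x) (Set.finite_range _)).trans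
    (Finite.card_range_le _)

lemma exists_mem_Msupp_apply_eq {V : Type} [DecidableEq V] (f : A × B × C → V) {x x' : X}
    (hf : ∀ v, (∑ r, if f (sch.share x r) = v then sch.pR r else 0) =
      ∑ r, if f (sch.share x' r) = v then sch.pR r else 0)
    {w : A × B × C} (hw : w ∈ Msupp sch x) : ∃ w' ∈ Msupp sch x', f w' = f w := by
  obtain ⟨r, hr, rfl⟩ := (mem_Msupp_iff sch).1 hw
  have hpos := (sum_ite_pos_iff sch.nonneg (fun r' => f (sch.share x r') = f (sch.share x r))).2
    ⟨r, hr, rfl⟩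
  rw [hf] at hpos
  obtain ⟨r', hr', hv⟩ := (sum_ite_pos_iff sch.nonneg _).1 hpos
  exact ⟨_, (mem_Msupp_iff sch).2 ⟨r', hr', rfl⟩, hv⟩

lemma apply_eq_of_mem_Msupp {Y : Type} (g : A × B × C → Y) {x : X} {y : Y}
    (hg : ∀ r, 0 < sch.pR r → g (sch.share x r) = y)
    {w : A × B × C} (hw : w ∈ Msupp sch x) : g w = y := by
  obtain ⟨r, hr, rfl⟩ := (mem_Msupp_iff sch).1 hw
  exact hg r hr

end Support

namespace Is3SS

variable {X1 X2 X3 A B C R : Type} [Fintype R] {S : Set (X1 × X2 × X3)}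
  {sch : Scheme (X1 × X2 × X3) A B C R} {x x' : X1 × X2 × X3} {w w' : A × B × C}

lemma exists_view1_eq (h : Is3SS S sch) (hx : x ∈ S) (hx' : x' ∈ S) (hxx' : x.1 = x'.1)
    (hw : w ∈ Msupp sch x) : ∃ w' ∈ Msupp sch x', view1 w' = view1 w :=
  exists_mem_Msupp_apply_eq sch view1 (x := x) (x' := x') (h.2.2.2.1 x hx x' hx' hxx') hw

lemma exists_view2_eq (h : Is3SS S sch) (hx : x ∈ S) (hx' : x' ∈ S) (hxx' : x.2.1 = x'.2.1)
    (hw : w ∈ Msupp sch x) : ∃ w' ∈ Msupp sch x', view2 w' = view2 w :=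
  exists_mem_Msupp_apply_eq sch view2 (x := x) (x' := x') (h.2.2.2.2.1 x hx x' hx' hxx') hw

lemma exists_view3_eq (h : Is3SS S sch) (hx : x ∈ S) (hx' : x' ∈ S) (hxx' : x.2.2 = x'.2.2)
    (hw : w ∈ Msupp sch x) : ∃ w' ∈ Msupp sch x', view3 w' = view3 w :=
  exists_mem_Msupp_apply_eq sch view3 (x := x) (x' := x') (h.2.2.2.2.2 x hx x' hx' hxx') hw

lemma view1_ne (h : Is3SS S sch) (hx : x ∈ S) (hx' : x' ∈ S) (hxx' : x.1 ≠ x'.1)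
    (hw : w ∈ Msupp sch x) (hw' : w' ∈ Msupp sch x') : view1 w ≠ view1 w' := by
  obtain ⟨φ, hφ⟩ := h.1
  intro hv
  rw [← apply_eq_of_mem_Msupp sch (φ ∘ view1) (hφ x hx) hw,
    ← apply_eq_of_mem_Msupp sch (φ ∘ view1) (hφ x' hx') hw', Function.comp, hv] at hxx'
  exact hxx' rfl

lemma view2_ne (h : Is3SS S sch) (hx : x ∈ S) (hx' : x' ∈ S) (hxx' : x.2.1 ≠ x'.2.1)
    (hw : w ∈ Msupp sch x) (hw' : w' ∈ Msupp sch x') : view2 w ≠ view2 w' := by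
  obtain ⟨φ, hφ⟩ := h.2.1
  intro hv
  rw [← apply_eq_of_mem_Msupp sch (φ ∘ view2) (hφ x hx) hw,
    ← apply_eq_of_mem_Msupp sch (φ ∘ view2) (hφ x' hx') hw', Function.comp, hv] at hxx'
  exact hxx' rfl

lemma view3_ne (h : Is3SS S sch) (hx : x ∈ S) (hx' : x' ∈ S) (hxx' : x.2.2 ≠ x'.2.2)
    (hw : w ∈ Msupp sch x) (hw' : w' ∈ Msupp sch x') : view3 w ≠ view3 w' := by
  obtain ⟨φ, hφ⟩ := h.2.2.1
  intro hv
  rw [← apply_eq_of_mem_Msupp sch (φ ∘ view3) (hφ x hx) hw,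
    ← apply_eq_of_mem_Msupp sch (φ ∘ view3) (hφ x' hx') hw', Function.comp, hv] at hxx'
  exact hxx' rfl

end Is3SS

lemma two_mul_card_image_le {α β : Type*} [DecidableEq β] (f : α → β) (s : Finset α)
    (h : ∀ p ∈ s, ∃ q ∈ s, q ≠ p ∧ f q = f p) : 2 * (s.image f).card ≤ s.card :=
  Finset.mul_card_image_le_card s 2 fun b hb => by
    obtain ⟨p, hp, rfl⟩ := Finset.mem_image.1 hb
    obtain ⟨q, hq, hqp, hfq⟩ := h p hp
    exact Finset.one_lt_card.2 ⟨p, by simp [hp], q, by simp [hq, hfq], hqp.symm⟩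

/-- `E` lies in (rows × columns) minus a cell, and has at least two points per row and per
column; with at most two rows it would have fewer than `2 · #columns` points. -/
lemma six_le_ncard_of_missing_cell {α γ : Type*} {E : Set (α × γ)} (hE : E.Finite)
    (hrow : ∀ p ∈ E, ∃ q ∈ E, q ≠ p ∧ q.1 = p.1) (hcol : ∀ p ∈ E, ∃ q ∈ E, q ≠ p ∧ q.2 = p.2)
    {a₀ : α} {c₀ : γ} (ha₀ : ∃ c, (a₀, c) ∈ E) (hc₀ : ∃ a, (a, c₀) ∈ E)
    (hmiss : (a₀, c₀) ∉ E) : 6 ≤ E.ncard := by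
  classical
  rw [Set.ncard_eq_toFinset_card E hE]
  set s := hE.toFinset
  have hrows := two_mul_card_image_le Prod.fst s (by simpa [s] using hrow)
  have hcols := two_mul_card_image_le Prod.snd s (by simpa [s] using hcol)
  obtain ⟨c, hc⟩ := ha₀
  obtain ⟨a, ha⟩ := hc₀
  have hcell : (a₀, c₀) ∈ s.image Prod.fst ×ˢ s.image Prod.snd :=
    Finset.mem_product.2 ⟨Finset.mem_image.2 ⟨(a₀, c), by simpa [s] using hc, rfl⟩,
      Finset.mem_image.2 ⟨(a, c₀), by simpa [s] using ha, rfl⟩⟩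
  have hsub : s ⊆ (s.image Prod.fst ×ˢ s.image Prod.snd).erase (a₀, c₀) := fun p hp =>
    Finset.mem_erase.2 ⟨by rintro rfl; exact hmiss (by simpa [s] using hp),
      Finset.mem_product.2 ⟨Finset.mem_image_of_mem _ hp, Finset.mem_image_of_mem _ hp⟩⟩
  have hpos := Finset.card_pos.2 ⟨_, hcell⟩
  have hcard := Finset.card_le_card hsub
  rw [Finset.card_erase_of_mem hcell, Finset.card_product] at hcard
  rw [Finset.card_product] at hpos
  by_contra! hlt
  have : (s.image Prod.fst).card * (s.image Prod.snd).card ≤ 2 * (s.image Prod.snd).card :=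
    Nat.mul_le_mul_right _ (by omega)
  omega

section Family13

variable {A B C R : Type} [Fintype R] {sch : Scheme (Bool × Bool × Bool) A B C R}
  {w : A × B × C}

lemma mem_S5_000 : ((false, false, false) : Bool × Bool × Bool) ∈ S5 := by simp [S5]
lemma mem_S5_001 : ((false, false, true) : Bool × Bool × Bool) ∈ S5 := by simp [S5]
lemma mem_S5_010 : ((false, true, false) : Bool × Bool × Bool) ∈ S5 := by simp [S5]
lemma mem_S5_111 : ((true, true, true) : Bool × Bool × Bool) ∈ S5 := by simp [S5]

/-- Through `000`: `P₁` cannot tell `001` from `000`, then `P₂` cannot tell `000` from `001`,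
so `W₃₁` alone must separate the two triples for `P₃`. -/
lemma Is3SS.S5_exists_view1_same_row (h : Is3SS S5 sch)
    (hw : w ∈ Msupp sch (false, false, true)) :
    ∃ w' ∈ Msupp sch (false, false, true), view1 w' ≠ view1 w ∧ w'.1 = w.1 := by
  obtain ⟨w₀, hw₀, h₀⟩ := h.exists_view1_eq mem_S5_001 mem_S5_000 rfl hw
  obtain ⟨w₁, hw₁, h₁⟩ := h.exists_view2_eq mem_S5_000 mem_S5_001 rfl hw₀
  simp only [view1, view2, Prod.mk.injEq] at h₀ h₁
  refine ⟨w₁, hw₁, fun he => h.view3_ne mem_S5_001 mem_S5_000 (by decide) hw₁ hw₀ ?_,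
    h₁.2.trans h₀.1⟩
  simp only [view1, view3, Prod.mk.injEq] at he ⊢
  exact ⟨he.2.trans h₀.2.symm, h₁.1⟩

/-- Through `000` and `010`: `P₂` must separate `000` from `010` by `W₁₂` alone. -/
lemma Is3SS.S5_exists_view1_same_col (h : Is3SS S5 sch)
    (hw : w ∈ Msupp sch (false, false, true)) :
    ∃ w' ∈ Msupp sch (false, false, true), view1 w' ≠ view1 w ∧ w'.2.2 = w.2.2 := by
  obtain ⟨w₀, hw₀, h₀⟩ := h.exists_view1_eq mem_S5_001 mem_S5_000 rfl hw
  obtain ⟨w₂, hw₂, h₂⟩ := h.exists_view3_eq mem_S5_000 mem_S5_010 rfl hw₀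
  obtain ⟨w', hw', h'⟩ := h.exists_view1_eq mem_S5_010 mem_S5_001 rfl hw₂
  simp only [view1, view3, Prod.mk.injEq] at h₀ h₂ h'
  refine ⟨w', hw', fun he => h.view2_ne mem_S5_010 mem_S5_000 (by decide) hw₂ hw₀ ?_,
    h'.2.trans (h₂.1.trans h₀.2)⟩
  simp only [view1, view2, Prod.mk.injEq] at he ⊢
  exact ⟨h₂.2, h'.1.symm.trans (he.1.trans h₀.1.symm)⟩

/-- Through `111` and `010`: the `W₁₂` of a triple for `111` occurs in `M₀₀₁`, but never next
to the `W₃₁` it had in `111`, since `P₁` separates `001` from `111`. -/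
lemma Is3SS.S5_exists_missing_view1 (h : Is3SS S5 sch) :
    ∃ a c, (∃ c', (a, c') ∈ view1 '' Msupp sch (false, false, true)) ∧
      (∃ a', (a', c) ∈ view1 '' Msupp sch (false, false, true)) ∧
      (a, c) ∉ view1 '' Msupp sch (false, false, true) := by
  obtain ⟨w, hw⟩ := Msupp_nonempty sch (false, false, true)
  obtain ⟨w₃, hw₃, h₃⟩ := h.exists_view3_eq mem_S5_001 mem_S5_111 rfl hw
  obtain ⟨w₄, hw₄, h₄⟩ := h.exists_view2_eq mem_S5_111 mem_S5_010 rfl hw₃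
  obtain ⟨w₅, hw₅, h₅⟩ := h.exists_view1_eq mem_S5_010 mem_S5_001 rfl hw₄
  simp only [view1, view2, view3, Prod.mk.injEq] at h₃ h₄ h₅
  refine ⟨w₃.1, w.2.2, ⟨w₅.2.2, w₅, hw₅, by simp [view1, h₅.1, h₄.2]⟩, ⟨w.1, w, hw, rfl⟩, ?_⟩
  rintro ⟨w', hw', he⟩
  refine h.view1_ne mem_S5_001 mem_S5_111 (by decide) hw' hw₃ ?_
  simp only [view1, Prod.mk.injEq] at he ⊢
  exact ⟨he.1, he.2.trans h₃.1.symm⟩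

lemma Is3SS.six_le_ncard_Msupp_001 (h : Is3SS S5 sch) :
    6 ≤ (Msupp sch (false, false, true)).ncard := by
  obtain ⟨a, c, ha, hc, hmiss⟩ := h.S5_exists_missing_view1
  have hfin := Msupp_finite sch (false, false, true)
  refine (six_le_ncard_of_missing_cell (hfin.image view1) ?_ ?_ ha hc hmiss).trans
    (Set.ncard_image_le hfin)
  · rintro _ ⟨w, hw, rfl⟩
    obtain ⟨w', hw', hne, hrow⟩ := h.S5_exists_view1_same_row hw
    exact ⟨view1 w', ⟨w', hw', rfl⟩, hne, hrow⟩
  · rintro _ ⟨w, hw, rfl⟩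
    obtain ⟨w', hw', hne, hcol⟩ := h.S5_exists_view1_same_col hw
    exact ⟨view1 w', ⟨w', hw', rfl⟩, hne, hcol⟩

end Family13

lemma sum_comp_eq_of_map_univ_eq {R V M : Type} [Fintype R] [AddCommMonoid M] {g g' : R → V}
    (hg : Finset.univ.val.map g = Finset.univ.val.map g') (F : V → M) :
    ∑ r, F (g r) = ∑ r, F (g' r) := by
  have := congrArg (fun m => (m.map F).sum) hg
  simpa only [Multiset.map_map, Function.comp_def, ← Finset.sum_eq_multiset_sum] using this

section UniformScheme

variable {X A B C R : Type} [Fintype R] {sch : Scheme X A B C R} {c : ℝ} {x x' : X}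

lemma probV1_eq_of_map_univ_eq (hpR : ∀ r, sch.pR r = c)
    (h : Finset.univ.val.map (fun r => view1 (sch.share x r)) =
      Finset.univ.val.map (fun r => view1 (sch.share x' r))) (v : A × C) :
    probV1 sch x v = probV1 sch x' v := by
  simp only [probV1, hpR]
  exact sum_comp_eq_of_map_univ_eq h fun u => if u = v then c else 0

lemma probV2_eq_of_map_univ_eq (hpR : ∀ r, sch.pR r = c)
    (h : Finset.univ.val.map (fun r => view2 (sch.share x r)) =
      Finset.univ.val.map (fun r => view2 (sch.share x' r))) (v : B × A) :
    probV2 sch x v = probV2 sch x' v := by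
  simp only [probV2, hpR]
  exact sum_comp_eq_of_map_univ_eq h fun u => if u = v then c else 0

lemma probV3_eq_of_map_univ_eq (hpR : ∀ r, sch.pR r = c)
    (h : Finset.univ.val.map (fun r => view3 (sch.share x r)) =
      Finset.univ.val.map (fun r => view3 (sch.share x' r))) (v : C × B) :
    probV3 sch x v = probV3 sch x' v := by
  simp only [probV3, hpR]
  exact sum_comp_eq_of_map_univ_eq h fun u => if u = v then c else 0

end UniformScheme

def otpDecode (v : (Bool × Bool) × (Bool × Bool)) : Bool := xor v.2.2 v.1.1

/-- The one-time pad: `r` encodes three uniform key bits; each party can unpad its own secret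
bit, while the other secret bit it sees is padded with a key bit it does not hold. -/
def otpShare (x : Bool × Bool × Bool) (r : Fin 8) :
    (Bool × Bool) × (Bool × Bool) × (Bool × Bool) :=
  let r₁ := r.val.testBit 0
  let r₂ := r.val.testBit 1
  let r₃ := r.val.testBit 2
  ((r₁, xor x.2.1 r₂), (r₂, xor x.2.2 r₃), (r₃, xor x.1 r₁))

lemma otpDecode_view : ∀ (x : Bool × Bool × Bool) (r : Fin 8),
    otpDecode (view1 (otpShare x r)) = x.1 ∧ otpDecode (view2 (otpShare x r)) = x.2.1 ∧
      otpDecode (view3 (otpShare x r)) = x.2.2 := by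
  decide

lemma otpShare_view1_map_univ_eq : ∀ x x' : Bool × Bool × Bool, x.1 = x'.1 →
    Finset.univ.val.map (fun r => view1 (otpShare x r)) =
      Finset.univ.val.map (fun r => view1 (otpShare x' r)) := by
  decide

lemma otpShare_view2_map_univ_eq : ∀ x x' : Bool × Bool × Bool, x.2.1 = x'.2.1 →
    Finset.univ.val.map (fun r => view2 (otpShare x r)) =
      Finset.univ.val.map (fun r => view2 (otpShare x' r)) := by
  decide

lemma otpShare_view3_map_univ_eq : ∀ x x' : Bool × Bool × Bool, x.2.2 = x'.2.2 →
    Finset.univ.val.map (fun r => view3 (otpShare x r)) =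
      Finset.univ.val.map (fun r => view3 (otpShare x' r)) := by
  decide

noncomputable def otpScheme :
    Scheme (Bool × Bool × Bool) (Bool × Bool) (Bool × Bool) (Bool × Bool) (Fin 8) where
  pR _ := 1 / 8
  nonneg _ := by norm_num
  sum_one := by simp
  share := otpShare

lemma is3SS_otpScheme (S : Set (Bool × Bool × Bool)) : Is3SS S otpScheme := by
  refine ⟨⟨otpDecode, fun x _ r _ => (otpDecode_view x r).1⟩,
    ⟨otpDecode, fun x _ r _ => (otpDecode_view x r).2.1⟩,
    ⟨otpDecode, fun x _ r _ => (otpDecode_view x r).2.2⟩,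
    fun x _ x' _ hx => ?_, fun x _ x' _ hx => ?_, fun x _ x' _ hx => ?_⟩
  · exact probV1_eq_of_map_univ_eq (fun _ => rfl) (otpShare_view1_map_univ_eq x x' hx)
  · exact probV2_eq_of_map_univ_eq (fun _ => rfl) (otpShare_view2_map_univ_eq x x' hx)
  · exact probV3_eq_of_map_univ_eq (fun _ => rfl) (otpShare_view3_map_univ_eq x x' hx)

/-- Any 3SS scheme for `S = {000, 001, 010, 111}` has `|M_{001}| ≥ 6`;
consequently `ρ(S) ≥ log₂ 6`. -/
theorem family13_lower_bound :
    (∀ {A B C R : Type} [Fintype R] (sch : Scheme (Bool × Bool × Bool) A B C R),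
      Is3SS S5 sch → 6 ≤ (Msupp sch (false, false, true)).ncard) ∧
    Real.logb 2 6 ≤ rho S5 := by
  refine ⟨fun _ h => h.six_le_ncard_Msupp_001, ?_⟩
  refine le_csInf ⟨_, 8, _, _, _, otpScheme, is3SS_otpScheme S5, rfl⟩ ?_
  rintro _ ⟨n, A, B, C, sch, h, rfl⟩
  have h6 : (6 : ℝ) ≤ n := by
    exact_mod_cast h.six_le_ncard_Msupp_001.trans
      ((ncard_Msupp_le_card sch _).trans (Nat.card_fin n).le)
  exact Real.logb_le_logb_of_le (by norm_num) (by norm_num) h6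
end

section
/- Suppose T, U, V, Z are jointly distributed finite random variables with I(U;Z|T) = 0 and I(T;V|Z) = 0. Then RI((U,T);(V,Z)) ≥ RI(T;Z), where RI(A;B) = I(A;B) − CI_GK(A;B) is the residual information and CI_GK denotes the Gács–Körner common information. -/
open scoped Classical

/-- A probability distribution on a finite sample space `Ω`. -/
structure FinProb (Ω : Type) [Fintype Ω] where
  p : Ω → ℝ
  nonneg : ∀ ω, 0 ≤ p ω
  sum_one : ∑ ω, p ω = 1

variable {Ω : Type} [Fintype Ω]

/-- `P(A = a)` for a random variable `A` on `(Ω, μ)`. -/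
noncomputable def prEq {α : Type} (μ : FinProb Ω) (A : Ω → α) (a : α) : ℝ :=
  ∑ ω, if A ω = a then μ.p ω else 0

/-- Shannon entropy (natural log) of a finite random variable. -/
noncomputable def ent {α : Type} [Fintype α] (μ : FinProb Ω) (A : Ω → α) : ℝ :=
  ∑ a, Real.negMulLog (prEq μ A a)

/-- Conditional entropy `H(A | B)`. -/
noncomputable def condEnt {α β : Type} [Fintype α] [Fintype β]
    (μ : FinProb Ω) (A : Ω → α) (B : Ω → β) : ℝ :=
  ent μ (fun ω => (A ω, B ω)) - ent μ B

/-- Mutual information `I(A ; B)`. -/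
noncomputable def mutInf {α β : Type} [Fintype α] [Fintype β]
    (μ : FinProb Ω) (A : Ω → α) (B : Ω → β) : ℝ :=
  ent μ A + ent μ B - ent μ (fun ω => (A ω, B ω))

/-- Conditional mutual information `I(A ; B | C)`. -/
noncomputable def condMutInf {α β γ : Type} [Fintype α] [Fintype β] [Fintype γ]
    (μ : FinProb Ω) (A : Ω → α) (B : Ω → β) (Cc : Ω → γ) : ℝ :=
  ent μ (fun ω => (A ω, Cc ω)) + ent μ (fun ω => (B ω, Cc ω))
    - ent μ (fun ω => (A ω, B ω, Cc ω)) - ent μ Cc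

/-- Gács–Körner common information `CI_GK(A ; B)`: the supremum of `H(Q)` over
random variables `Q` that are almost surely a deterministic function of `A`
and almost surely a deterministic function of `B`. -/
noncomputable def gkInf {α β : Type} [Fintype α] [Fintype β]
    (μ : FinProb Ω) (A : Ω → α) (B : Ω → β) : ℝ :=
  sSup { h : ℝ | ∃ (n : ℕ) (f : α → Fin n) (g : β → Fin n),
    (∀ ω, 0 < μ.p ω → f (A ω) = g (B ω)) ∧ h = ent μ (fun ω => f (A ω)) }

/-- Residual information `RI(A ; B) = I(A ; B) − CI_GK(A ; B)`. -/
noncomputable def resInf {α β : Type} [Fintype α] [Fintype β]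
    (μ : FinProb Ω) (A : Ω → α) (B : Ω → β) : ℝ :=
  mutInf μ A B - gkInf μ A B

/-!
For a common part `Q = f(U,T) = g(V,Z)` of the two views,
`I(UT;VZ) = H(Q) + I(UT;VZ|Q) ≥ H(Q) + I(T;Z|Q) = H(Q) + I(T;Z) + I(T;Q|Z) - I(T;Q)`,
so it suffices to bound `I(T;Q) ≤ CI_GK(T;Z)`. The privacy conditions make `Q` independent of `Z`
given `T` and of `T` given `Z`. Hence the conditional law of `Q` given `T` agrees almost surely
with its conditional law given `Z`: it is a common function `C` of `T` and `Z`, `Q` is independent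
of `T` given `C`, and `I(T;Q) = I(C;Q) ≤ H(C) ≤ CI_GK(T;Z)`.

Writing entropies as expectations `H(X) = E[-log P(X)]` turns `I(A;B|C)` into the relative entropy
of the joint law with respect to `P(a,c) P(b,c) / P(c)`, so Gibbs' inequality gives both its
nonnegativity and the factorization characterizing `I(A;B|C) = 0`.
-/

section Law

variable {α β γ : Type} (μ : FinProb Ω)

lemma prEq_nonneg (A : Ω → α) (a : α) : 0 ≤ prEq μ A a :=
  Finset.sum_nonneg fun ω _ => by split_ifs <;> simp [μ.nonneg ω]

lemma prEq_congr {A B : Ω → α} (h : ∀ ω, 0 < μ.p ω → A ω = B ω) (a : α) :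
    prEq μ A a = prEq μ B a :=
  Finset.sum_congr rfl fun ω _ => by
    rcases (μ.nonneg ω).eq_or_lt with h0 | h0
    · simp [← h0]
    · rw [h ω h0]

lemma le_prEq (A : Ω → α) (ω : Ω) : μ.p ω ≤ prEq μ A (A ω) := by
  simpa [prEq] using Finset.single_le_sum (f := fun ω' => if A ω' = A ω then μ.p ω' else 0)
    (fun ω' _ => by split_ifs <;> simp [μ.nonneg ω']) (Finset.mem_univ ω)

lemma prEq_le_prEq_comp (A : Ω → α) (F : α → β) (a : α) :
    prEq μ A a ≤ prEq μ (fun ω => F (A ω)) (F a) :=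
  Finset.sum_le_sum fun ω _ => by split_ifs with h h' <;> simp_all [μ.nonneg ω]

lemma prEq_comp_injective (A : Ω → α) {Φ : α → β} (hΦ : Function.Injective Φ) (a : α) :
    prEq μ (fun ω => Φ (A ω)) (Φ a) = prEq μ A a := by
  simp only [prEq, hΦ.eq_iff]

lemma sum_prEq_mul [Fintype α] (A : Ω → α) (φ : α → ℝ) :
    ∑ a, prEq μ A a * φ a = ∑ ω, μ.p ω * φ (A ω) := by
  simp only [prEq, Finset.sum_mul, ite_mul, zero_mul]
  rw [Finset.sum_comm]
  simp

lemma sum_prEq [Fintype α] (A : Ω → α) : ∑ a, prEq μ A a = 1 := by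
  simpa [μ.sum_one] using sum_prEq_mul μ A fun _ => 1

lemma prEq_comp [Fintype α] (A : Ω → α) (F : α → β) (b : β) :
    prEq μ (fun ω => F (A ω)) b = ∑ a, if F a = b then prEq μ A a else 0 := by
  simpa [prEq, mul_ite] using (sum_prEq_mul μ A fun a => if F a = b then 1 else 0).symm

lemma sum_prEq_pair [Fintype α] [Fintype γ] (A : Ω → α) (C : Ω → γ) (c : γ) :
    ∑ a, prEq μ (fun ω => (A ω, C ω)) (a, c) = prEq μ C c := by
  rw [prEq_comp μ (fun ω => (A ω, C ω)) Prod.snd c]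
  simp [Fintype.sum_prod_type]

end Law

section Entropy

variable {α β : Type} [Fintype α] [Fintype β] (μ : FinProb Ω)

lemma ent_eq_sum_mul_neg_log (A : Ω → α) : ent μ A = ∑ ω, μ.p ω * -Real.log (prEq μ A (A ω)) := by
  rw [ent, ← sum_prEq_mul μ A fun a => -Real.log (prEq μ A a)]
  simp [Real.negMulLog]

lemma ent_congr {A B : Ω → α} (h : ∀ ω, 0 < μ.p ω → A ω = B ω) : ent μ A = ent μ B := by
  simp only [ent, prEq_congr μ h]

lemma ent_comp_le (A : Ω → α) (F : α → β) : ent μ (fun ω => F (A ω)) ≤ ent μ A := by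
  rw [ent_eq_sum_mul_neg_log, ent_eq_sum_mul_neg_log]
  refine Finset.sum_le_sum fun ω _ => ?_
  rcases (μ.nonneg ω).eq_or_lt with h0 | h0
  · simp [← h0]
  · have hpos : 0 < prEq μ A (A ω) := h0.trans_le (le_prEq μ A ω)
    exact mul_le_mul_of_nonneg_left
      (neg_le_neg (Real.log_le_log hpos (prEq_le_prEq_comp μ A F (A ω)))) h0.le

lemma ent_eq_of_comp_eq_of_comp {A : Ω → α} {B : Ω → β} (f : α → β) (g : β → α)
    (hB : ∀ ω, 0 < μ.p ω → B ω = f (A ω) := by intros; rfl)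
    (hA : ∀ ω, 0 < μ.p ω → A ω = g (B ω) := by intros; rfl) :
    ent μ A = ent μ B :=
  le_antisymm ((ent_congr μ hA).trans_le (ent_comp_le μ B g))
    ((ent_congr μ hB).trans_le (ent_comp_le μ A f))

end Entropy

section Gibbs

open InformationTheory

lemma mul_klFun_div {p q : ℝ} (hq : 0 < q) :
    q * klFun (p / q) = p * Real.log (p / q) + q - p := by
  rw [klFun_apply]
  field_simp

lemma mul_log_div_add_sub_nonneg {p q : ℝ} (hp : 0 ≤ p) (hq : 0 ≤ q) (hpq : 0 < p → 0 < q) :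
    0 ≤ p * Real.log (p / q) + q - p := by
  rcases hp.eq_or_lt with rfl | hp
  · simpa using hq
  · rw [← mul_klFun_div (hpq hp)]
    exact mul_nonneg hq (klFun_nonneg (div_nonneg hp.le hq))

lemma mul_log_div_add_sub_eq_zero_iff {p q : ℝ} (hp : 0 ≤ p) (hpq : 0 < p → 0 < q) :
    p * Real.log (p / q) + q - p = 0 ↔ p = q := by
  rcases hp.eq_or_lt with rfl | hp
  · simp [eq_comm]
  · have hq := hpq hp
    rw [← mul_klFun_div hq, mul_eq_zero, klFun_eq_zero_iff (div_nonneg hp.le hq.le),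
      div_eq_one_iff_eq hq.ne']
    simp [hq.ne']

variable {ι : Type} [Fintype ι] {p q : ι → ℝ}

lemma sum_mul_log_div_eq_sum_add_sub (hsum : ∑ i, q i = ∑ i, p i) :
    ∑ i, p i * Real.log (p i / q i) = ∑ i, (p i * Real.log (p i / q i) + q i - p i) := by
  simp only [Finset.sum_sub_distrib, Finset.sum_add_distrib, hsum, add_sub_cancel_right]

lemma sum_mul_log_div_nonneg (hp : ∀ i, 0 ≤ p i) (hq : ∀ i, 0 ≤ q i)
    (hpq : ∀ i, 0 < p i → 0 < q i) (hsum : ∑ i, q i = ∑ i, p i) :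
    0 ≤ ∑ i, p i * Real.log (p i / q i) := by
  rw [sum_mul_log_div_eq_sum_add_sub hsum]
  exact Finset.sum_nonneg fun i _ => mul_log_div_add_sub_nonneg (hp i) (hq i) (hpq i)

lemma sum_mul_log_div_eq_zero_iff (hp : ∀ i, 0 ≤ p i) (hq : ∀ i, 0 ≤ q i)
    (hpq : ∀ i, 0 < p i → 0 < q i) (hsum : ∑ i, q i = ∑ i, p i) :
    ∑ i, p i * Real.log (p i / q i) = 0 ↔ p = q := by
  rw [sum_mul_log_div_eq_sum_add_sub hsum, Finset.sum_eq_zero_iff_of_nonneg fun i _ =>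
    mul_log_div_add_sub_nonneg (hp i) (hq i) (hpq i), funext_iff]
  simp only [Finset.mem_univ, true_implies, mul_log_div_add_sub_eq_zero_iff (hp _) (hpq _)]

end Gibbs

section CondIndepLaw

variable {α β γ : Type} (μ : FinProb Ω) (A : Ω → α) (B : Ω → β) (C : Ω → γ)

noncomputable def condIndepLaw (x : α × β × γ) : ℝ :=
  prEq μ (fun ω => (A ω, C ω)) (x.1, x.2.2) * prEq μ (fun ω => (B ω, C ω)) (x.2.1, x.2.2)
    / prEq μ C x.2.2

lemma prEq_marginals_pos {a : α} {b : β} {c : γ}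
    (h : 0 < prEq μ (fun ω => (A ω, B ω, C ω)) (a, b, c)) :
    0 < prEq μ (fun ω => (A ω, C ω)) (a, c) ∧ 0 < prEq μ (fun ω => (B ω, C ω)) (b, c) ∧
      0 < prEq μ C c :=
  ⟨h.trans_le (prEq_le_prEq_comp μ _ (fun x : α × β × γ => (x.1, x.2.2)) (a, b, c)),
    h.trans_le (prEq_le_prEq_comp μ _ (fun x : α × β × γ => (x.2.1, x.2.2)) (a, b, c)),
    h.trans_le (prEq_le_prEq_comp μ _ (fun x : α × β × γ => x.2.2) (a, b, c))⟩

lemma condIndepLaw_nonneg (x : α × β × γ) : 0 ≤ condIndepLaw μ A B C x :=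
  div_nonneg (mul_nonneg (prEq_nonneg μ _ _) (prEq_nonneg μ _ _)) (prEq_nonneg μ C _)

lemma condIndepLaw_pos_of_prEq_pos :
    ∀ x, 0 < prEq μ (fun ω => (A ω, B ω, C ω)) x → 0 < condIndepLaw μ A B C x := by
  rintro ⟨a, b, c⟩ h
  obtain ⟨hac, hbc, hc⟩ := prEq_marginals_pos μ A B C h
  exact div_pos (mul_pos hac hbc) hc

end CondIndepLaw

section CondMutInf

variable {α β γ : Type} [Fintype α] [Fintype β] [Fintype γ] (μ : FinProb Ω)
  (A : Ω → α) (B : Ω → β) (C : Ω → γ)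

lemma sum_condIndepLaw : ∑ x, condIndepLaw μ A B C x = 1 := by
  simp only [condIndepLaw, Fintype.sum_prod_type]
  calc _ = ∑ c, (∑ a, prEq μ (fun ω => (A ω, C ω)) (a, c)) *
          (∑ b, prEq μ (fun ω => (B ω, C ω)) (b, c)) / prEq μ C c := by
        simp only [Finset.sum_mul, Finset.mul_sum, Finset.sum_div]
        rw [Finset.sum_comm_cycle]
        exact Finset.sum_congr rfl fun c _ => Finset.sum_comm
    _ = ∑ c, prEq μ C c := by simp only [sum_prEq_pair, mul_self_div_self]
    _ = 1 := sum_prEq μ C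

lemma condMutInf_eq_sum_mul_log_div :
    condMutInf μ A B C = ∑ x, prEq μ (fun ω => (A ω, B ω, C ω)) x *
      Real.log (prEq μ (fun ω => (A ω, B ω, C ω)) x / condIndepLaw μ A B C x) := by
  have hterm : ∀ x : α × β × γ, prEq μ (fun ω => (A ω, B ω, C ω)) x *
      Real.log (prEq μ (fun ω => (A ω, B ω, C ω)) x / condIndepLaw μ A B C x) =
      prEq μ (fun ω => (A ω, B ω, C ω)) x *
        (Real.log (prEq μ (fun ω => (A ω, B ω, C ω)) x) + Real.log (prEq μ C x.2.2)
          - Real.log (prEq μ (fun ω => (A ω, C ω)) (x.1, x.2.2))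
          - Real.log (prEq μ (fun ω => (B ω, C ω)) (x.2.1, x.2.2))) := by
    rintro ⟨a, b, c⟩
    rcases (prEq_nonneg μ (fun ω => (A ω, B ω, C ω)) (a, b, c)).eq_or_lt with h0 | h0
    · simp [← h0]
    obtain ⟨hac, hbc, hc⟩ := prEq_marginals_pos μ A B C h0
    rw [condIndepLaw, Real.log_div h0.ne' (by positivity), Real.log_div (by positivity) hc.ne',
      Real.log_mul hac.ne' hbc.ne']
    ring
  rw [Finset.sum_congr rfl fun x _ => hterm x, sum_prEq_mul]
  simp only [condMutInf, ent_eq_sum_mul_neg_log, ← Finset.sum_add_distrib, ← Finset.sum_sub_distrib]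
  exact Finset.sum_congr rfl fun ω _ => by ring

lemma condMutInf_nonneg : 0 ≤ condMutInf μ A B C := by
  rw [condMutInf_eq_sum_mul_log_div]
  exact sum_mul_log_div_nonneg (prEq_nonneg μ _) (condIndepLaw_nonneg μ A B C)
    (condIndepLaw_pos_of_prEq_pos μ A B C) (by rw [sum_condIndepLaw, sum_prEq])

lemma condMutInf_eq_zero_iff : condMutInf μ A B C = 0 ↔
    ∀ a b c, prEq μ (fun ω => (A ω, B ω, C ω)) (a, b, c) * prEq μ C c =
      prEq μ (fun ω => (A ω, C ω)) (a, c) * prEq μ (fun ω => (B ω, C ω)) (b, c) := by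
  rw [condMutInf_eq_sum_mul_log_div, sum_mul_log_div_eq_zero_iff (prEq_nonneg μ _)
    (condIndepLaw_nonneg μ A B C) (condIndepLaw_pos_of_prEq_pos μ A B C)
    (by rw [sum_condIndepLaw, sum_prEq]), funext_iff]
  simp only [Prod.forall]
  refine forall₃_congr fun a b c => ?_
  rcases eq_or_ne (prEq μ C c) 0 with hc | hc
  · have hac : prEq μ (fun ω => (A ω, C ω)) (a, c) = 0 := le_antisymm
      (hc ▸ prEq_le_prEq_comp μ _ Prod.snd (a, c)) (prEq_nonneg μ _ _)
    have habc : prEq μ (fun ω => (A ω, B ω, C ω)) (a, b, c) = 0 := le_antisymm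
      (hc ▸ prEq_le_prEq_comp μ _ (fun x : α × β × γ => x.2.2) (a, b, c)) (prEq_nonneg μ _ _)
    simp [condIndepLaw, hc, hac, habc]
  · rw [condIndepLaw, eq_div_iff hc]

end CondMutInf

section Identities

variable {α β γ δ ε : Type} [Fintype α] [Fintype β] [Fintype γ] [Fintype δ] [Fintype ε]
  (μ : FinProb Ω)
  (A : Ω → α) (B : Ω → β) (C : Ω → γ)

lemma mutInf_comm : mutInf μ A B = mutInf μ B A := by
  have h : ent μ (fun ω => (A ω, B ω)) = ent μ (fun ω => (B ω, A ω)) :=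
    ent_eq_of_comp_eq_of_comp μ Prod.swap Prod.swap
  simp only [mutInf, h]
  ring

lemma condMutInf_comm : condMutInf μ A B C = condMutInf μ B A C := by
  have h : ent μ (fun ω => (A ω, B ω, C ω)) = ent μ (fun ω => (B ω, A ω, C ω)) :=
    ent_eq_of_comp_eq_of_comp μ (fun x => (x.2.1, x.1, x.2.2)) (fun x => (x.2.1, x.1, x.2.2))
  simp only [condMutInf, h]
  ring

lemma condMutInf_congr_left {A' : Ω → α} (h : ∀ ω, 0 < μ.p ω → A ω = A' ω) :
    condMutInf μ A B C = condMutInf μ A' B C := by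
  have hAC := ent_congr μ fun ω hω => show (A ω, C ω) = (A' ω, C ω) by rw [h ω hω]
  have hABC := ent_congr μ fun ω hω => show (A ω, B ω, C ω) = (A' ω, B ω, C ω) by rw [h ω hω]
  simp only [condMutInf, hAC, hABC]

lemma condMutInf_pair_self_left :
    condMutInf μ (fun ω => (A ω, C ω)) B C = condMutInf μ A B C := by
  have hAC : ent μ (fun ω => ((A ω, C ω), C ω)) = ent μ (fun ω => (A ω, C ω)) :=
    ent_eq_of_comp_eq_of_comp μ (fun x => (x.1.1, x.2)) (fun x => ((x.1, x.2), x.2))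
  have hABC : ent μ (fun ω => ((A ω, C ω), B ω, C ω)) = ent μ (fun ω => (A ω, B ω, C ω)) :=
    ent_eq_of_comp_eq_of_comp μ (fun x => (x.1.1, x.2)) (fun x => ((x.1, x.2.2), x.2))
  simp only [condMutInf, hAC, hABC]

lemma condMutInf_comp_left_le (F : α → δ) :
    condMutInf μ (fun ω => F (A ω)) B C ≤ condMutInf μ A B C := by
  have hAC : ent μ (fun ω => (A ω, F (A ω), C ω)) = ent μ (fun ω => (A ω, C ω)) :=
    ent_eq_of_comp_eq_of_comp μ (fun x => (x.1, x.2.2)) (fun x => (x.1, F x.1, x.2))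
  have hBC : ent μ (fun ω => (B ω, F (A ω), C ω)) = ent μ (fun ω => (F (A ω), B ω, C ω)) :=
    ent_eq_of_comp_eq_of_comp μ (fun x => (x.2.1, x.1, x.2.2)) (fun x => (x.2.1, x.1, x.2.2))
  have hABC : ent μ (fun ω => (A ω, B ω, F (A ω), C ω)) = ent μ (fun ω => (A ω, B ω, C ω)) :=
    ent_eq_of_comp_eq_of_comp μ (fun x => (x.1, x.2.1, x.2.2.2))
      (fun x => (x.1, x.2.1, F x.1, x.2.2))
  have := condMutInf_nonneg μ A B fun ω => (F (A ω), C ω)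
  simp only [condMutInf, hAC, hBC, hABC] at this ⊢
  linarith

lemma condMutInf_comp_le (F : α → δ) (G : β → ε) :
    condMutInf μ (fun ω => F (A ω)) (fun ω => G (B ω)) C ≤ condMutInf μ A B C :=
  calc condMutInf μ (fun ω => F (A ω)) (fun ω => G (B ω)) C
      ≤ condMutInf μ A (fun ω => G (B ω)) C := condMutInf_comp_left_le μ A _ C F
    _ = condMutInf μ (fun ω => G (B ω)) A C := condMutInf_comm μ _ _ C
    _ ≤ condMutInf μ B A C := condMutInf_comp_left_le μ B A C G
    _ = condMutInf μ A B C := condMutInf_comm μ B A C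

lemma mutInf_eq_ent_add_condMutInf (f : α → γ) (g : β → γ)
    (hfg : ∀ ω, 0 < μ.p ω → f (A ω) = g (B ω)) :
    mutInf μ A B = ent μ (fun ω => f (A ω)) + condMutInf μ A B (fun ω => f (A ω)) := by
  have hA : ent μ (fun ω => (A ω, f (A ω))) = ent μ A :=
    ent_eq_of_comp_eq_of_comp μ Prod.fst fun a => (a, f a)
  have hB : ent μ (fun ω => (B ω, f (A ω))) = ent μ B :=
    ent_eq_of_comp_eq_of_comp μ Prod.fst (fun b => (b, g b)) (hA := fun ω hω => by rw [hfg ω hω])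
  have hAB : ent μ (fun ω => (A ω, B ω, f (A ω))) = ent μ (fun ω => (A ω, B ω)) :=
    ent_eq_of_comp_eq_of_comp μ (fun x => (x.1, x.2.1)) fun x => (x.1, x.2, f x.1)
  simp only [mutInf, condMutInf, hA, hB, hAB]
  ring

lemma mutInf_eq_mutInf_comp_add_condMutInf (F : β → γ) :
    mutInf μ A B = mutInf μ A (fun ω => F (B ω)) + condMutInf μ A B (fun ω => F (B ω)) := by
  have hB : ent μ (fun ω => (B ω, F (B ω))) = ent μ B :=
    ent_eq_of_comp_eq_of_comp μ Prod.fst fun b => (b, F b)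
  have hAB : ent μ (fun ω => (A ω, B ω, F (B ω))) = ent μ (fun ω => (A ω, B ω)) :=
    ent_eq_of_comp_eq_of_comp μ (fun x => (x.1, x.2.1)) fun x => (x.1, x.2, F x.2)
  simp only [mutInf, condMutInf, hB, hAB]
  ring

lemma mutInf_add_condMutInf_comm :
    mutInf μ A B + condMutInf μ A C B = mutInf μ A C + condMutInf μ A B C := by
  have hBC : ent μ (fun ω => (C ω, B ω)) = ent μ (fun ω => (B ω, C ω)) :=
    ent_eq_of_comp_eq_of_comp μ Prod.swap Prod.swap
  have hABC : ent μ (fun ω => (A ω, C ω, B ω)) = ent μ (fun ω => (A ω, B ω, C ω)) :=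
    ent_eq_of_comp_eq_of_comp μ (fun x => (x.1, x.2.2, x.2.1)) fun x => (x.1, x.2.2, x.2.1)
  simp only [mutInf, condMutInf, hBC, hABC]
  ring

lemma mutInf_le_ent_right : mutInf μ A B ≤ ent μ B := by
  have := ent_comp_le μ (fun ω => (A ω, B ω)) Prod.fst
  simp only [mutInf] at this ⊢
  linarith

end Identities

section CommonInformation

variable {α β γ : Type} [Fintype α] [Fintype β] [Fintype γ] (μ : FinProb Ω)
  (X : Ω → α) (Y : Ω → β)

lemma le_gkInf {n : ℕ} (f : α → Fin n) (g : β → Fin n)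
    (hfg : ∀ ω, 0 < μ.p ω → f (X ω) = g (Y ω)) : ent μ (fun ω => f (X ω)) ≤ gkInf μ X Y :=
  le_csSup ⟨ent μ X, by rintro _ ⟨n, f, g, -, rfl⟩; exact ent_comp_le μ X f⟩ ⟨n, f, g, hfg, rfl⟩

lemma gkInf_le {b : ℝ} (h : ∀ n (f : α → Fin n) (g : β → Fin n),
      (∀ ω, 0 < μ.p ω → f (X ω) = g (Y ω)) → ent μ (fun ω => f (X ω)) ≤ b) :
    gkInf μ X Y ≤ b :=
  csSup_le ⟨_, 1, fun _ => 0, fun _ => 0, fun _ _ => rfl, rfl⟩ <| by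
    rintro _ ⟨n, f, g, hfg, rfl⟩
    exact h n f g hfg

lemma ent_le_gkInf (F : α → γ) (G : β → γ) (hFG : ∀ ω, 0 < μ.p ω → F (X ω) = G (Y ω)) :
    ent μ (fun ω => F (X ω)) ≤ gkInf μ X Y := by
  let e := Fintype.equivFin γ
  calc ent μ (fun ω => F (X ω)) = ent μ (fun ω => e (F (X ω))) :=
        ent_eq_of_comp_eq_of_comp μ e e.symm (hA := fun ω _ => (e.symm_apply_apply _).symm)
    _ ≤ gkInf μ X Y :=
        le_gkInf μ X Y (fun x => e (F x)) (fun y => e (G y)) fun ω hω => congrArg e (hFG ω hω)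

end CommonInformation

section CondLaw

variable {α β κ : Type} (μ : FinProb Ω) (Q : Ω → κ) (X : Ω → α)

noncomputable def condLaw (x : α) (q : κ) : ℝ :=
  prEq μ (fun ω => (Q ω, X ω)) (q, x) / prEq μ X x

lemma mul_prEq_eq_of_condLaw_eq {x x' : α} (h : condLaw μ Q X x = condLaw μ Q X x') (q : κ) :
    prEq μ (fun ω => (Q ω, X ω)) (q, x) * prEq μ X x' =
      prEq μ (fun ω => (Q ω, X ω)) (q, x') * prEq μ X x := by
  have marginal_eq_zero : ∀ x, prEq μ X x = 0 → prEq μ (fun ω => (Q ω, X ω)) (q, x) = 0 :=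
    fun x hx => le_antisymm (hx ▸ prEq_le_prEq_comp μ _ Prod.snd (q, x)) (prEq_nonneg μ _ _)
  by_cases hx : prEq μ X x = 0
  · simp [hx, marginal_eq_zero x hx]
  by_cases hx' : prEq μ X x' = 0
  · simp [hx', marginal_eq_zero x' hx']
  exact (div_eq_div_iff hx hx').1 (congrFun h q)

variable [Fintype α] [Fintype κ]

lemma condLaw_eq_of_condMutInf_eq_zero {β : Type} [Fintype β] (Y : Ω → β)
    (hX : condMutInf μ Q Y X = 0) (hY : condMutInf μ Q X Y = 0) {ω : Ω} (hω : 0 < μ.p ω) :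
    condLaw μ Q X (X ω) = condLaw μ Q Y (Y ω) := by
  funext q
  have hQYX := (condMutInf_eq_zero_iff μ Q Y X).1 hX q (Y ω) (X ω)
  have hQXY := (condMutInf_eq_zero_iff μ Q X Y).1 hY q (X ω) (Y ω)
  have hx := hω.trans_le (le_prEq μ X ω)
  have hy := hω.trans_le (le_prEq μ Y ω)
  have hxy := hω.trans_le (le_prEq μ (fun ω => (X ω, Y ω)) ω)
  have hswap₃ : prEq μ (fun ω => (Q ω, Y ω, X ω)) (q, Y ω, X ω) =
      prEq μ (fun ω => (Q ω, X ω, Y ω)) (q, X ω, Y ω) :=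
    prEq_comp_injective μ (fun ω => (Q ω, X ω, Y ω)) (Φ := fun w => (w.1, w.2.2, w.2.1))
      (Function.LeftInverse.injective (g := fun w => (w.1, w.2.2, w.2.1)) fun _ => rfl)
      (q, X ω, Y ω)
  have hswap₂ : prEq μ (fun ω => (Y ω, X ω)) (Y ω, X ω) =
      prEq μ (fun ω => (X ω, Y ω)) (X ω, Y ω) :=
    prEq_comp_injective μ (fun ω => (X ω, Y ω)) Prod.swap_injective (X ω, Y ω)
  rw [hswap₃, hswap₂] at hQYX
  rw [condLaw, condLaw, div_eq_div_iff hx.ne' hy.ne']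
  refine mul_right_cancel₀ hxy.ne' ?_
  linear_combination prEq μ X (X ω) * hQXY - prEq μ Y (Y ω) * hQYX

lemma condMutInf_eq_zero_of_condLaw_comp {γ : Type} [Fintype γ] (F : α → γ)
    (hF : ∀ x x', F x = F x' → condLaw μ Q X x = condLaw μ Q X x') :
    condMutInf μ Q X (fun ω => F (X ω)) = 0 := by
  rw [condMutInf_eq_zero_iff]
  intro q x k
  have hQXF : prEq μ (fun ω => (Q ω, X ω, F (X ω))) (q, x, k) =
      if F x = k then prEq μ (fun ω => (Q ω, X ω)) (q, x) else 0 := by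
    rw [prEq_comp μ (fun ω => (Q ω, X ω)) fun w => (w.1, w.2, F w.2)]
    simp [Fintype.sum_prod_type, ite_and]
  have hQF : prEq μ (fun ω => (Q ω, F (X ω))) (q, k) =
      ∑ x', if F x' = k then prEq μ (fun ω => (Q ω, X ω)) (q, x') else 0 := by
    rw [prEq_comp μ (fun ω => (Q ω, X ω)) fun w => (w.1, F w.2)]
    simp [Fintype.sum_prod_type, ite_and]
  have hXF : prEq μ (fun ω => (X ω, F (X ω))) (x, k) = if F x = k then prEq μ X x else 0 := by
    rw [prEq_comp μ X fun x => (x, F x)]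
    simp [ite_and]
  rw [hQXF, hQF, hXF, prEq_comp μ X F]
  split_ifs with hx
  · rw [Finset.mul_sum, Finset.sum_mul]
    refine Finset.sum_congr rfl fun x' _ => ?_
    split_ifs with hx'
    · exact mul_prEq_eq_of_condLaw_eq μ Q X (hF x x' (hx.trans hx'.symm)) q
    · simp
  · simp

lemma mutInf_le_gkInf_of_condMutInf_eq_zero {β : Type} [Fintype β] (Y : Ω → β)
    (hX : condMutInf μ Q Y X = 0) (hY : condMutInf μ Q X Y = 0) :
    mutInf μ Q X ≤ gkInf μ X Y := by
  let S : Finset (κ → ℝ) :=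
    Finset.univ.image (condLaw μ Q X) ∪ Finset.univ.image (condLaw μ Q Y)
  let F : α → S := fun x => ⟨condLaw μ Q X x, by simp [S]⟩
  let G : β → S := fun y => ⟨condLaw μ Q Y y, by simp [S]⟩
  calc mutInf μ Q X
      = mutInf μ Q (fun ω => F (X ω)) + condMutInf μ Q X (fun ω => F (X ω)) :=
        mutInf_eq_mutInf_comp_add_condMutInf μ Q X F
    _ = mutInf μ Q (fun ω => F (X ω)) := by
        rw [condMutInf_eq_zero_of_condLaw_comp μ Q X F fun x x' h => congrArg Subtype.val h,
          add_zero]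
    _ ≤ ent μ (fun ω => F (X ω)) := mutInf_le_ent_right μ Q _
    _ ≤ gkInf μ X Y := ent_le_gkInf μ X Y F G fun ω hω =>
        Subtype.ext (condLaw_eq_of_condMutInf_eq_zero μ Q X Y hX hY hω)

end CondLaw

/-- Secure data processing inequality: if `I(U;Z|T) = 0` and `I(T;V|Z) = 0`,
then `RI((U,T);(V,Z)) ≥ RI(T;Z)`. -/
theorem secure_data_processing {T U V Z : Type}
    [Fintype T] [Fintype U] [Fintype V] [Fintype Z]
    (μ : FinProb Ω) (fT : Ω → T) (fU : Ω → U) (fV : Ω → V) (fZ : Ω → Z)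
    (h1 : condMutInf μ fU fZ fT = 0) (h2 : condMutInf μ fT fV fZ = 0) :
    resInf μ (fun ω => (fU ω, fT ω)) (fun ω => (fV ω, fZ ω)) ≥ resInf μ fT fZ := by
  suffices key : ∀ n (f : U × T → Fin n) (g : V × Z → Fin n),
      (∀ ω, 0 < μ.p ω → f (fU ω, fT ω) = g (fV ω, fZ ω)) →
      ent μ (fun ω => f (fU ω, fT ω)) ≤ mutInf μ (fun ω => (fU ω, fT ω)) (fun ω => (fV ω, fZ ω))
        - mutInf μ fT fZ + gkInf μ fT fZ by
    have := gkInf_le μ _ _ key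
    unfold resInf
    linarith
  intro n f g hfg
  set Q : Ω → Fin n := fun ω => f (fU ω, fT ω)
  have hQZ : condMutInf μ Q fZ fT = 0 := by
    refine le_antisymm ?_ (condMutInf_nonneg μ Q fZ fT)
    calc condMutInf μ Q fZ fT ≤ condMutInf μ (fun ω => (fU ω, fT ω)) fZ fT :=
          condMutInf_comp_left_le μ _ fZ fT f
      _ = 0 := by rw [condMutInf_pair_self_left, h1]
  have hQT : condMutInf μ Q fT fZ = 0 := by
    refine le_antisymm ?_ (condMutInf_nonneg μ Q fT fZ)
    calc condMutInf μ Q fT fZ = condMutInf μ (fun ω => g (fV ω, fZ ω)) fT fZ :=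
          condMutInf_congr_left μ Q fT fZ hfg
      _ ≤ condMutInf μ (fun ω => (fV ω, fZ ω)) fT fZ := condMutInf_comp_left_le μ _ fT fZ g
      _ = 0 := by rw [condMutInf_pair_self_left, condMutInf_comm, h2]
  have hcommon := mutInf_le_gkInf_of_condMutInf_eq_zero μ Q fT fZ hQZ hQT
  have hsplit := mutInf_eq_ent_add_condMutInf μ (fun ω => (fU ω, fT ω)) (fun ω => (fV ω, fZ ω))
    f g hfg
  have hproc := condMutInf_comp_le μ (fun ω => (fU ω, fT ω)) (fun ω => (fV ω, fZ ω)) Q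
    Prod.snd Prod.snd
  have hinter := mutInf_add_condMutInf_comm μ fT fZ Q
  have := condMutInf_nonneg μ fT Q fZ
  rw [mutInf_comm] at hcommon
  linarith
end
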